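/- Let G be a finite simple graph and let S be a subset of V(G) such that every vertex in S ∪ N(S) has at least k neighbors in S. Run the following procedure: color all vertices black; while there exists a black or blue vertex v with fewer than k black neighbors, color v red and color its black neighbors blue. Then no vertex of S is ever colored red or blue; i.e., every vertex of S remains black throughout the procedure. -/
import Mathlib

open SimpleGraph Set
open scoped Classical

inductive RBColor : Type
  | black : RBColor
  | blue : RBColor
  | red : RBColor
deriving DecidableEq

/-- `N(S)`: the set of vertices outside `S` adjacent to some vertex of `S`. -/
def outNbhd {V : Type*} (G : SimpleGraph V) (S : Set V) : Set V :=
  {v | v ∉ S ∧ ∃ u ∈ S, G.Adj v u}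

/-- The strong `k`-core property: every vertex of `S ∪ N(S)` has at least `k`
neighbors in `S`. -/
def StrongCoreProp {V : Type*} (G : SimpleGraph V) (k : ℕ) (S : Set V) : Prop :=
  ∀ v ∈ S ∪ outNbhd G S, k ≤ (S ∩ G.neighborSet v).ncard

/-- One step of the red/blue/black coloring procedure with parameter `k`:
a black or blue vertex `v` with fewer than `k` black neighbors is colored red,
its black neighbors are colored blue, and everything else is unchanged. -/
def ColorStep {V : Type*} (G : SimpleGraph V) (k : ℕ)
    (col col' : V → RBColor) : Prop :=
  ∃ v : V, (col v = RBColor.black ∨ col v = RBColor.blue) ∧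
    ({u ∈ G.neighborSet v | col u = RBColor.black}).ncard < k ∧
    col' v = RBColor.red ∧
    (∀ u : V, u ≠ v →
      col' u = if G.Adj v u ∧ col u = RBColor.black then RBColor.blue else col u)

theorem strong_core_stays_black
    {V : Type*} [Fintype V] (G : SimpleGraph V) (k : ℕ) (S : Set V)
    (hS : StrongCoreProp G k S)
    (seq : ℕ → V → RBColor)
    (h0 : seq 0 = fun _ => RBColor.black)
    (hstep : ∀ t : ℕ, ColorStep G k (seq t) (seq (t + 1)) ∨ seq (t + 1) = seq t) :
    ∀ t : ℕ, ∀ v ∈ S, seq t v = RBColor.black := by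
  intro t
  induction t with
  | zero => intro v _; rw [h0]
  | succ t ih =>
    intro w hw
    rcases hstep t with hstep' | heq
    · obtain ⟨v, _, hlt, _, hoth⟩ := hstep'
      have hv : v ∉ S ∪ outNbhd G S := by
        intro hv
        have hsub : S ∩ G.neighborSet v ⊆
            {u ∈ G.neighborSet v | seq t u = RBColor.black} := by
          rintro u ⟨huS, hun⟩
          exact ⟨hun, ih u huS⟩
        have h1 := Set.ncard_le_ncard hsub (Set.toFinite _)
        have h2 := hS v hv
        omega
      have hwv : w ≠ v := fun h => hv (Or.inl (h ▸ hw))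
      have hnadj : ¬ G.Adj v w := fun h => hv (by
        by_cases hvS : v ∈ S
        · exact Or.inl hvS
        · exact Or.inr ⟨hvS, w, hw, h⟩)
      rw [hoth w hwv]
      simp only [hnadj, false_and, if_false]
      exact ih w hw
    · rw [heq]; exact ih w hw
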